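/- Let (G,k) and (G',k') be two dynamically equivalent weakly reversible mass-action systems. Then they have the same stoichiometric subspace: S(G) = S(G'). -/
import Mathlib

open scoped BigOperators Classical
noncomputable section

/-- The monomial `x ^ y = ∏ i, x i ^ y i` (real exponents). -/
def monom {n : ℕ} (x y : Fin n → ℝ) : ℝ := ∏ i, x i ^ y i

/-- A reaction network: a finite directed graph with vertices in `ℝⁿ`,
edges indexed by `Fin m` via source and target maps. -/
structure RN (n : ℕ) where
  m : ℕ
  src : Fin m → Fin n → ℝ
  tgt : Fin m → Fin n → ℝ

namespace RN

variable {n : ℕ} (G : RN n)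

/-- The (finite) vertex set of the network. -/
def Vset : Finset (Fin n → ℝ) :=
  Finset.image G.src Finset.univ ∪ Finset.image G.tgt Finset.univ

lemma src_mem (e : Fin G.m) : G.src e ∈ G.Vset :=
  Finset.mem_union_left _ (Finset.mem_image_of_mem _ (Finset.mem_univ e))

/-- The vertices, as a type. -/
def Vert := {y : Fin n → ℝ // y ∈ G.Vset}

/-- Undirected adjacency between vertices. -/
def adjSub (a b : G.Vert) : Prop :=
  ∃ e, (G.src e = a.1 ∧ G.tgt e = b.1) ∨ (G.src e = b.1 ∧ G.tgt e = a.1)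

/-- The connected components of the underlying undirected graph. -/
def Components := Quot G.adjSub

/-- The number of connected components. -/
def numComp : ℕ := Nat.card G.Components

/-- The connected component of a vertex. -/
def compOf (v : G.Vert) : G.Components := Quot.mk _ v

/-- The stoichiometric subspace: the span of the reaction vectors. -/
def stoich : Submodule ℝ (Fin n → ℝ) :=
  Submodule.span ℝ (Set.range fun e => G.tgt e - G.src e)

/-- The deficiency `|V| - ℓ - dim S` (as an integer). -/
def deficiency : ℤ :=
  (G.Vset.card : ℤ) - G.numComp - Module.finrank ℝ G.stoich

/-- `y` is a source vertex of `G`. -/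
def IsSource (y : Fin n → ℝ) : Prop := ∃ e, G.src e = y

/-- The net reaction vector of `y` for the mass-action system `(G, k)`. -/
def netVec (k : Fin G.m → ℝ) (y : Fin n → ℝ) : Fin n → ℝ :=
  ∑ e, if G.src e = y then k e • (G.tgt e - G.src e) else 0

/-- The mass-action vector field generated by `(G, k)`. -/
def massAction (k : Fin G.m → ℝ) (x : Fin n → ℝ) : Fin n → ℝ :=
  ∑ e, (k e * monom x (G.src e)) • (G.tgt e - G.src e)

/-- `G` is weakly reversible: for every edge there is a directed path back from its
target to its source, i.e. every edge lies on a directed cycle. -/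
def WeaklyReversible : Prop :=
  ∀ e, Relation.ReflTransGen (fun a b => ∃ e', G.src e' = a ∧ G.tgt e' = b)
    (G.tgt e) (G.src e)

/-- The number of vertices of a connected component. -/
def compVertCount (c : G.Components) : ℕ := Nat.card {v : G.Vert // G.compOf v = c}

/-- The stoichiometric subspace of a connected component. -/
def compStoich (c : G.Components) : Submodule ℝ (Fin n → ℝ) :=
  Submodule.span ℝ
    {w | ∃ e, G.compOf ⟨G.src e, G.src_mem e⟩ = c ∧ w = G.tgt e - G.src e}

/-- The deficiency `|V_L| - 1 - dim S_L` of a connected component (as an integer). -/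
def compDef (c : G.Components) : ℤ :=
  (G.compVertCount c : ℤ) - 1 - Module.finrank ℝ (G.compStoich c)

end RN

/-! ### Auxiliary lemmas -/

namespace DynEquivAux

/-- Avoid finitely many hyperplanes. -/
lemma exists_sep {n : ℕ} (D : Finset (Fin n → ℝ)) (hD : ∀ d ∈ D, d ≠ 0) :
    ∃ u : Fin n → ℝ, ∀ d ∈ D, (∑ i, u i * d i) ≠ 0 := by
  classical
  induction D using Finset.induction_on with
  | empty => exact ⟨0, by simp⟩
  | @insert d D hd ih =>
    obtain ⟨u, hu⟩ := ih (fun d' hd' => hD d' (Finset.mem_insert_of_mem hd'))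
    have hdne : d ≠ 0 := hD d (Finset.mem_insert_self _ _)
    obtain ⟨i0, hi0⟩ : ∃ i0, d i0 ≠ 0 := by
      by_contra h; push_neg at h; exact hdne (funext h)
    set w : Fin n → ℝ := Pi.single i0 1 with hw
    have hwip : ∀ d' : Fin n → ℝ, (∑ i, w i * d' i) = d' i0 := by
      intro d'
      rw [Finset.sum_eq_single i0]
      · simp [hw]
      · intro b _ hb; simp [hw, Pi.single_eq_of_ne hb]
      · simp
    set B : Finset ℝ :=
      (insert d D).image (fun d' => -(∑ i, u i * d' i) / (∑ i, w i * d' i)) with hB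
    obtain ⟨ε, hε⟩ := Infinite.exists_notMem_finset B
    refine ⟨fun i => u i + ε * w i, ?_⟩
    intro d' hd'
    have hexp : (∑ i, (u i + ε * w i) * d' i)
        = (∑ i, u i * d' i) + ε * (∑ i, w i * d' i) := by
      rw [Finset.mul_sum, ← Finset.sum_add_distrib]
      congr 1; ext i; ring
    rw [hexp]
    by_cases hwz : (∑ i, w i * d' i) = 0
    · rw [hwz, mul_zero, add_zero]
      rcases Finset.mem_insert.mp hd' with h | h
      · subst h; rw [hwip] at hwz; exact absurd hwz hi0
      · exact hu d' h
    · intro hzero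
      apply hε
      rw [hB]
      refine Finset.mem_image.mpr ⟨d', hd', ?_⟩
      field_simp
      linarith [hzero]

/-- The character `t ↦ exp (c * t)` as a monoid hom from `Multiplicative ℝ`. -/
def expChar (c : ℝ) : Multiplicative ℝ →* ℝ where
  toFun t := Real.exp (c * t.toAdd)
  map_one' := by simp
  map_mul' s t := by
    simp [← Real.exp_add, ← mul_add]

lemma expChar_injective : Function.Injective expChar := by
  intro c c' h
  have := congrArg (fun f : Multiplicative ℝ →* ℝ => f (Multiplicative.ofAdd 1)) h
  simpa [expChar, Real.exp_eq_exp] using this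

/-- Linear independence of distinct exponentials. -/
lemma exp_indep {α : Type*} (Y : Finset α) (c : α → ℝ) (hc : Set.InjOn c Y)
    (a : α → ℝ) (h : ∀ t : ℝ, (∑ y ∈ Y, a y * Real.exp (c y * t)) = 0) :
    ∀ y ∈ Y, a y = 0 := by
  classical
  have li : LinearIndependent ℝ (fun y : ↥Y => ⇑(expChar (c y.1))) := by
    apply (linearIndependent_monoidHom (Multiplicative ℝ) ℝ).comp
    intro y y' hyy'
    exact Subtype.ext (hc y.2 y'.2 (expChar_injective hyy'))
  have h0 : (∑ y : ↥Y, a y.1 • ⇑(expChar (c y.1))) = 0 := by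
    funext t
    have := h t.toAdd
    simpa [Finset.sum_apply, expChar,
      ← Finset.sum_attach Y (fun y => a y * Real.exp (c y * t.toAdd)),
      mul_comm] using this
  intro y hy
  exact linearIndependent_iff'.mp li Finset.univ (fun y => a y.1) h0 ⟨y, hy⟩ (Finset.mem_univ _)

/-- Linear independence of distinct monomials on the positive orthant. -/
lemma monom_indep {n : ℕ} (Y : Finset (Fin n → ℝ)) (v : (Fin n → ℝ) → (Fin n → ℝ))
    (h : ∀ x : Fin n → ℝ, (∀ i, 0 < x i) → (∑ y ∈ Y, monom x y • v y) = 0) :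
    ∀ y ∈ Y, v y = 0 := by
  classical
  set D : Finset (Fin n → ℝ) :=
    ((Y ×ˢ Y).filter fun p => p.1 ≠ p.2).image (fun p => p.1 - p.2) with hD
  obtain ⟨u, hu⟩ := exists_sep D (by
    intro d hd
    rw [hD] at hd
    obtain ⟨p, hp, rfl⟩ := Finset.mem_image.mp hd
    exact sub_ne_zero.mpr (Finset.mem_filter.mp hp).2)
  set c : (Fin n → ℝ) → ℝ := fun y => ∑ i, u i * y i with hc
  have hcinj : Set.InjOn c Y := by
    intro y hy y' hy' hcy
    by_contra hne
    have hmem : y - y' ∈ D := Finset.mem_image.mpr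
      ⟨(y, y'), Finset.mem_filter.mpr ⟨Finset.mem_product.mpr ⟨hy, hy'⟩, hne⟩, rfl⟩
    apply hu _ hmem
    have : (∑ i, u i * (y - y') i) = c y - c y' := by
      simp only [hc, Pi.sub_apply, mul_sub, Finset.sum_sub_distrib]
    rw [this, hcy, sub_self]
  intro y hy
  funext i
  refine exp_indep Y c hcinj (fun y => v y i) (fun t => ?_) y hy
  set x : Fin n → ℝ := fun j => Real.exp (u j * t) with hx
  have hxpos : ∀ j, 0 < x j := fun j => Real.exp_pos _
  have hmon : ∀ y : Fin n → ℝ, monom x y = Real.exp (c y * t) := by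
    intro y
    unfold monom
    have : ∀ j, x j ^ y j = Real.exp (u j * t * y j) := by
      intro j
      rw [hx]
      rw [Real.rpow_def_of_pos (Real.exp_pos _), Real.log_exp]
    simp only [this, ← Real.exp_sum]
    congr 1
    rw [hc, Finset.sum_mul]
    congr 1; ext j; ring
  have := congrFun (h x hxpos) i
  simpa [Finset.sum_apply, hmon, mul_comm] using this

/-- Directed reachability in `G`. -/
def Reach {n : ℕ} (G : RN n) : (Fin n → ℝ) → (Fin n → ℝ) → Prop :=
  Relation.ReflTransGen (fun a b => ∃ e', G.src e' = a ∧ G.tgt e' = b)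

lemma tgt_mem {n : ℕ} (G : RN n) (e : Fin G.m) : G.tgt e ∈ G.Vset :=
  Finset.mem_union_right _ (Finset.mem_image_of_mem _ (Finset.mem_univ e))

lemma reach_symm {n : ℕ} {G : RN n} (hwr : G.WeaklyReversible)
    {a b : Fin n → ℝ} (h : Reach G a b) : Reach G b a := by
  induction h with
  | refl => exact Relation.ReflTransGen.refl
  | tail h1 h2 ih =>
    obtain ⟨e, he1, he2⟩ := h2
    have : Reach G _ (G.src e) := hwr e
    rw [he1, he2] at this
    exact Relation.ReflTransGen.trans this ih

lemma reach_mem {n : ℕ} {G : RN n} {a c : Fin n → ℝ}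
    (ha : a ∈ G.Vset) (h : Reach G a c) : c ∈ G.Vset := by
  induction h with
  | refl => exact ha
  | tail _ h2 _ =>
    obtain ⟨e, _, he2⟩ := h2
    rw [← he2]; exact tgt_mem G e

/-- Every net reaction vector lies in the stoichiometric subspace. -/
lemma netVec_mem_stoich {n : ℕ} (G : RN n) (k : Fin G.m → ℝ) (y : Fin n → ℝ) :
    G.netVec k y ∈ G.stoich := by
  refine Submodule.sum_mem _ (fun e _ => ?_)
  by_cases h : G.src e = y
  · rw [if_pos h]
    exact Submodule.smul_mem _ _ (Submodule.subset_span ⟨e, rfl⟩)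
  · rw [if_neg h]; exact Submodule.zero_mem _

/-- The mass-action vector field as a monomial-weighted sum of net reaction vectors. -/
lemma massAction_eq_sum {n : ℕ} (G : RN n) (k : Fin G.m → ℝ)
    (Y : Finset (Fin n → ℝ)) (hY : ∀ e, G.src e ∈ Y) (x : Fin n → ℝ) :
    G.massAction k x = ∑ y ∈ Y, monom x y • G.netVec k y := by
  classical
  unfold RN.massAction RN.netVec
  have : ∀ y ∈ Y, monom x y • (∑ e, if G.src e = y then k e • (G.tgt e - G.src e) else 0)
      = ∑ e, if G.src e = y then (k e * monom x (G.src e)) • (G.tgt e - G.src e) else 0 := by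
    intro y _
    rw [Finset.smul_sum]
    refine Finset.sum_congr rfl (fun e _ => ?_)
    by_cases h : G.src e = y
    · rw [if_pos h, if_pos h, smul_smul, ← h]
      congr 1; ring
    · rw [if_neg h, if_neg h, smul_zero]
  rw [Finset.sum_congr rfl this, Finset.sum_comm]
  refine Finset.sum_congr rfl (fun e _ => ?_)
  rw [Finset.sum_ite_eq Y (G.src e) (fun _ => (k e * monom x (G.src e)) • (G.tgt e - G.src e))]
  rw [if_pos (hY e)]

/-- For weakly reversible systems, the stoichiometric subspace is contained in the span
of the net reaction vectors. -/
lemma stoich_le_span_netVec {n : ℕ} (G : RN n) (k : Fin G.m → ℝ)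
    (hk : ∀ e, 0 < k e) (hwr : G.WeaklyReversible) :
    G.stoich ≤ Submodule.span ℝ (Set.range (G.netVec k)) := by
  classical
  set W : Submodule ℝ (Fin n → ℝ) := Submodule.span ℝ (Set.range (G.netVec k)) with hW
  rw [RN.stoich, Submodule.span_le]
  rintro _ ⟨e0, rfl⟩
  rw [SetLike.mem_coe, ← Subspace.forall_mem_dualAnnihilator_apply_eq_zero_iff]
  intro φ hφ
  have hann : ∀ y : Fin n → ℝ, φ (G.netVec k y) = 0 := fun y =>
    Submodule.mem_dualAnnihilator φ |>.mp hφ _ (Submodule.subset_span ⟨y, rfl⟩)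
  -- step lemma: at a local max, every out-neighbor achieves the max
  have step : ∀ a : Fin n → ℝ, (∀ e, G.src e = a → φ (G.tgt e) ≤ φ a) →
      ∀ e, G.src e = a → φ (G.tgt e) = φ a := by
    intro a hmax
    have hsum : (∑ e, if G.src e = a then k e * (φ (G.tgt e) - φ a) else 0) = 0 := by
      have h0 := hann a
      rw [RN.netVec, map_sum] at h0
      calc (∑ e, if G.src e = a then k e * (φ (G.tgt e) - φ a) else 0)
          = ∑ e, φ (if G.src e = a then k e • (G.tgt e - G.src e) else 0) := by
            refine Finset.sum_congr rfl (fun e _ => ?_)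
            by_cases h : G.src e = a
            · rw [if_pos h, if_pos h, map_smul, map_sub, h]
              simp [smul_eq_mul]
            · rw [if_neg h, if_neg h, map_zero]
        _ = 0 := h0
    have hnp : ∀ e ∈ Finset.univ, (if G.src e = a then k e * (φ (G.tgt e) - φ a) else 0) ≤ 0 := by
      intro e _
      by_cases h : G.src e = a
      · rw [if_pos h]
        exact mul_nonpos_of_nonneg_of_nonpos (hk e).le (by linarith [hmax e h])
      · rw [if_neg h]
    have hz := (Finset.sum_eq_zero_iff_of_nonpos hnp).mp hsum
    intro e he
    have := hz e (Finset.mem_univ e)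
    rw [if_pos he] at this
    have := (mul_eq_zero.mp this).resolve_left (ne_of_gt (hk e))
    linarith [this]
  -- maximum principle on the reachable set of the source
  set a := G.src e0 with ha
  set T : Finset (Fin n → ℝ) := G.Vset.filter (fun cx => Reach G a cx) with hT
  have haT : a ∈ T := Finset.mem_filter.mpr ⟨G.src_mem e0, Relation.ReflTransGen.refl⟩
  obtain ⟨cs, hcsT, hcsmax⟩ := T.exists_max_image φ ⟨a, haT⟩
  have hacs : Reach G a cs := (Finset.mem_filter.mp hcsT).2
  have hcsa : Reach G cs a := reach_symm hwr hacs
  have key : ∀ d, Reach G cs d → φ d = φ cs := by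
    intro d hd
    induction hd with
    | refl => rfl
    | tail h1 h2 ih =>
      rename_i b c
      obtain ⟨e, he1, he2⟩ := h2
      have hreach_b : Reach G a b := Relation.ReflTransGen.trans hacs h1
      have hmaxb : ∀ e', G.src e' = b → φ (G.tgt e') ≤ φ b := by
        intro e' he'
        have hreach : Reach G a (G.tgt e') :=
          Relation.ReflTransGen.tail hreach_b ⟨e', he', rfl⟩
        have hmem : G.tgt e' ∈ T :=
          Finset.mem_filter.mpr ⟨reach_mem (G.src_mem e0) hreach, hreach⟩
        calc φ (G.tgt e') ≤ φ cs := hcsmax _ hmem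
        _ = φ b := (ih).symm
      have := step b hmaxb e he1
      rw [he2] at this
      rw [this, ih]
  have hφa : φ a = φ cs := key a hcsa
  have hφb : φ (G.tgt e0) = φ cs := by
    refine key (G.tgt e0) ?_
    exact Relation.ReflTransGen.tail hcsa ⟨e0, rfl, rfl⟩
  rw [map_sub, hφa, hφb, sub_self]

end DynEquivAux

open DynEquivAux in
/-- Two dynamically equivalent weakly reversible mass-action systems have the same
stoichiometric subspace. -/
theorem dyn_equiv_weakly_reversible_same_stoich {n : ℕ} (G G' : RN n)
    (k : Fin G.m → ℝ) (k' : Fin G'.m → ℝ)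
    (hk : ∀ e, 0 < k e) (hk' : ∀ e, 0 < k' e)
    (hwr : G.WeaklyReversible) (hwr' : G'.WeaklyReversible)
    (hequiv : ∀ x : Fin n → ℝ, (∀ i, 0 < x i) →
      G.massAction k x = G'.massAction k' x) :
    G.stoich = G'.stoich := by
  classical
  set Y : Finset (Fin n → ℝ) := G.Vset ∪ G'.Vset with hY
  have hYG : ∀ e, G.src e ∈ Y := fun e => Finset.mem_union_left _ (G.src_mem e)
  have hYG' : ∀ e, G'.src e ∈ Y := fun e => Finset.mem_union_right _ (G'.src_mem e)
  have hnetY : ∀ y ∈ Y, G.netVec k y - G'.netVec k' y = 0 := by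
    refine monom_indep Y (fun y => G.netVec k y - G'.netVec k' y) (fun x hx => ?_)
    have h1 := massAction_eq_sum G k Y hYG x
    have h2 := massAction_eq_sum G' k' Y hYG' x
    calc (∑ y ∈ Y, monom x y • (G.netVec k y - G'.netVec k' y))
        = (∑ y ∈ Y, monom x y • G.netVec k y) - ∑ y ∈ Y, monom x y • G'.netVec k' y := by
          rw [← Finset.sum_sub_distrib]
          exact Finset.sum_congr rfl (fun y _ => smul_sub _ _ _)
      _ = G.massAction k x - G'.massAction k' x := by rw [h1, h2]
      _ = 0 := by rw [hequiv x hx, sub_self]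
  have hnet : G.netVec k = G'.netVec k' := by
    funext y
    by_cases hy : y ∈ Y
    · have := hnetY y hy
      exact sub_eq_zero.mp this
    · have hz : ∀ (H : RN n) (κ : Fin H.m → ℝ), (∀ e, H.src e ∈ Y) → H.netVec κ y = 0 := by
        intro H κ hs
        refine Finset.sum_eq_zero (fun e _ => ?_)
        rw [if_neg]
        intro h
        exact hy (h ▸ hs e)
      rw [hz G k hYG, hz G' k' hYG']
  have hspan : ∀ (H : RN n) (κ : Fin H.m → ℝ), (∀ e, 0 < κ e) → H.WeaklyReversible →
      H.stoich = Submodule.span ℝ (Set.range (H.netVec κ)) := by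
    intro H κ hκ hw
    refine le_antisymm (stoich_le_span_netVec H κ hκ hw) ?_
    rw [Submodule.span_le]
    rintro _ ⟨y, rfl⟩
    exact netVec_mem_stoich H κ y
  rw [hspan G k hk hwr, hspan G' k' hk' hwr', hnet]
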